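/- Let A ∈ ℝ^{m×n}, let H ∈ ℝ^{n×n} be symmetric positive definite, and let R_d ∈ ℝ^{m×m} be symmetric positive definite. Then the symmetric (n+m)×(n+m) matrix M = [[−H, Aᵀ],[A, R_d]] is nonsingular and has exactly n strictly negative eigenvalues and exactly m strictly positive eigenvalues, counted with multiplicity. -/

import Mathlib

/-!
If the quadratic form of `M = U diag(d) Uᵀ` is negative definite on a subspace `W`, then the
coordinates `(Uᵀ x)_k` with `d_k < 0` already determine `x ∈ W` (otherwise the form would be
`≥ 0`), so `dim W ≤ #{k | d_k < 0}`; similarly for positive definiteness. For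
`M = [[-H, Aᵀ], [A, R_d]]` the form is `-uᵀ H u` on `ℝⁿ × 0` and `uᵀ H u + yᵀ R_d y` on the
graph `{(H⁻¹ Aᵀ y, y)}`, where the first block row of `M x` vanishes. These subspaces have
dimensions `n` and `m`, so the counts of negative and positive eigenvalues, which add up to at
most `n + m`, are exactly `n` and `m`, and no eigenvalue is zero.
-/

open Matrix Finset Module

theorem Submodule.finrank_le_card_of_exists_ne_zero {K κ V : Type*} [Field K]
    [AddCommGroup V] [Module K V] (W : Submodule K V) (c : V →ₗ[K] κ → K) (s : Finset κ)
    (h : ∀ x ∈ W, x ≠ 0 → ∃ i ∈ s, c x i ≠ 0) : finrank K W ≤ #s := by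
  let r : W →ₗ[K] s → K := LinearMap.funLeft K K Subtype.val ∘ₗ c ∘ₗ W.subtype
  have hr : Function.Injective r := by
    rw [← LinearMap.ker_eq_bot, LinearMap.ker_eq_bot']
    intro x hx
    by_contra hx0
    obtain ⟨i, hi, hci⟩ := h x x.2 (by simpa using hx0)
    exact hci (congrFun hx ⟨i, hi⟩)
  simpa using LinearMap.finrank_le_finrank_of_injective hr

namespace Matrix

variable {ι κ : Type*} [Fintype ι] [Fintype κ]

def NegDefOn (M : Matrix ι ι ℝ) (W : Submodule ℝ (ι → ℝ)) : Prop :=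
  ∀ x ∈ W, x ≠ 0 → x ⬝ᵥ M *ᵥ x < 0

def PosDefOn (M : Matrix ι ι ℝ) (W : Submodule ℝ (ι → ℝ)) : Prop :=
  ∀ x ∈ W, x ≠ 0 → 0 < x ⬝ᵥ M *ᵥ x

theorem PosDefOn.neg {M : Matrix ι ι ℝ} {W : Submodule ℝ (ι → ℝ)} (h : M.PosDefOn W) :
    (-M).NegDefOn W := fun x hx hx0 => by
  simpa [neg_mulVec] using h x hx hx0

variable [DecidableEq κ]

theorem dotProduct_mul_diagonal_mul_transpose_mulVec {R : Type*} [CommRing R]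
    (U : Matrix ι κ R) (d : κ → R) (x : ι → R) :
    x ⬝ᵥ (U * diagonal d * Uᵀ) *ᵥ x = ∑ k, d k * (Uᵀ *ᵥ x) k ^ 2 := by
  rw [← mulVec_mulVec, ← mulVec_mulVec, dotProduct_mulVec, ← mulVec_transpose]
  simp only [dotProduct, mulVec_diagonal, sq]
  exact Finset.sum_congr rfl fun k _ => by ring

theorem NegDefOn.finrank_le_card_neg {M : Matrix ι ι ℝ} {W : Submodule ℝ (ι → ℝ)}
    (h : M.NegDefOn W) {U : Matrix ι κ ℝ} {d : κ → ℝ} (hM : M = U * diagonal d * Uᵀ) :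
    finrank ℝ W ≤ #{k | d k < 0} := by
  refine W.finrank_le_card_of_exists_ne_zero Uᵀ.mulVecLin _ fun x hx hx0 => ?_
  by_contra! hcoord
  have hnonneg : 0 ≤ x ⬝ᵥ M *ᵥ x := by
    rw [hM, dotProduct_mul_diagonal_mul_transpose_mulVec]
    refine Finset.sum_nonneg fun k _ => ?_
    by_cases hk : d k < 0
    · have hzero : (Uᵀ *ᵥ x) k = 0 := hcoord k (by simpa using hk)
      simp [hzero]
    · exact mul_nonneg (not_lt.1 hk) (sq_nonneg _)
  exact (h x hx hx0).not_ge hnonneg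

theorem PosDefOn.finrank_le_card_pos {M : Matrix ι ι ℝ} {W : Submodule ℝ (ι → ℝ)}
    (h : M.PosDefOn W) {U : Matrix ι κ ℝ} {d : κ → ℝ} (hM : M = U * diagonal d * Uᵀ) :
    finrank ℝ W ≤ #{k | 0 < d k} := by
  have hnegM : -M = U * diagonal (-d) * Uᵀ := by
    rw [hM, show -d = fun k => -d k from rfl, ← diagonal_neg, Matrix.mul_neg, Matrix.neg_mul]
  simpa using h.neg.finrank_le_card_neg hnegM

theorem IsHermitian.eq_mul_diagonal_eigenvalues_mul_transpose {M : Matrix κ κ ℝ}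
    (hM : M.IsHermitian) :
    M = (hM.eigenvectorUnitary : Matrix κ κ ℝ) * diagonal hM.eigenvalues *
      (hM.eigenvectorUnitary : Matrix κ κ ℝ)ᵀ := by
  conv_lhs => rw [hM.spectral_theorem]
  simp [Unitary.conjStarAlgAut_apply, star_eq_conjTranspose]

theorem IsHermitian.det_ne_zero_iff {M : Matrix κ κ ℝ} (hM : M.IsHermitian) :
    M.det ≠ 0 ↔ ∀ k, hM.eigenvalues k ≠ 0 := by
  simp [hM.det_eq_prod_eigenvalues, Finset.prod_ne_zero_iff]

end Matrix

theorem card_neg_add_card_pos_add_card_zero {κ : Type*} [Fintype κ] (f : κ → ℝ) :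
    #{k | f k < 0} + #{k | 0 < f k} + #{k | f k = 0} = Fintype.card κ := by
  rw [card_filter, card_filter, card_filter, ← sum_add_distrib, ← sum_add_distrib,
    ← card_univ, card_eq_sum_ones]
  refine sum_congr rfl fun k _ => ?_
  rcases lt_trichotomy (f k) 0 with h | h | h
  · simp [h, h.ne, h.not_gt]
  · simp [h]
  · simp [h, h.ne', h.not_gt]

namespace Matrix

variable {n m K : Type*} [Field K]

@[simp]
theorem finrank_range_mulVecLin_fromRows_one_left [Fintype n] [DecidableEq n]
    (B : Matrix m n K) :
    finrank K (LinearMap.range (fromRows (1 : Matrix n n K) B).mulVecLin) = Fintype.card n := by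
  refine (LinearMap.finrank_range_of_inj fun u v huv => ?_).trans (finrank_fintype_fun_eq_card K)
  simpa [fromRows_mulVec] using congrArg (· ∘ Sum.inl) huv

@[simp]
theorem finrank_range_mulVecLin_fromRows_one_right [Fintype m] [DecidableEq m]
    (B : Matrix n m K) :
    finrank K (LinearMap.range (fromRows B (1 : Matrix m m K)).mulVecLin) = Fintype.card m := by
  refine (LinearMap.finrank_range_of_inj fun u v huv => ?_).trans (finrank_fintype_fun_eq_card K)
  simpa [fromRows_mulVec] using congrArg (· ∘ Sum.inr) huv

variable [Fintype n] [Fintype m]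

theorem sumElim_dotProduct_fromBlocks_mulVec_sumElim {R : Type*} [CommRing R]
    {H : Matrix n n R} {A : Matrix m n R} (D : Matrix m m R) {u : n → R} {y : m → R}
    (h : H *ᵥ u = Aᵀ *ᵥ y) :
    Sum.elim u y ⬝ᵥ fromBlocks (-H) Aᵀ A D *ᵥ Sum.elim u y = u ⬝ᵥ H *ᵥ u + y ⬝ᵥ D *ᵥ y := by
  have hcross : y ⬝ᵥ A *ᵥ u = u ⬝ᵥ H *ᵥ u := by
    rw [dotProduct_mulVec, ← mulVec_transpose, ← h, dotProduct_comm]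
  rw [fromBlocks_mulVec, sumElim_dotProduct_sumElim]
  simp only [Sum.elim_comp_inl, Sum.elim_comp_inr, neg_mulVec, h, neg_add_cancel,
    dotProduct_zero, dotProduct_add, hcross, zero_add]

theorem PosDef.negDefOn_fromBlocks_neg [DecidableEq n] {H : Matrix n n ℝ} (hH : H.PosDef)
    (B : Matrix n m ℝ) (C : Matrix m n ℝ) (D : Matrix m m ℝ) :
    (fromBlocks (-H) B C D).NegDefOn
      (LinearMap.range (fromRows (1 : Matrix n n ℝ) (0 : Matrix m n ℝ)).mulVecLin) := by
  rintro _ ⟨u, rfl⟩ hx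
  have hu : u ≠ 0 := by rintro rfl; exact hx (map_zero _)
  simp only [mulVecLin_apply, fromRows_mulVec, one_mulVec, zero_mulVec, fromBlocks_mulVec,
    sumElim_dotProduct_sumElim]
  simpa [neg_mulVec] using hH.dotProduct_mulVec_pos hu

theorem PosDef.posDefOn_fromBlocks_neg [DecidableEq n] [DecidableEq m] {H : Matrix n n ℝ}
    (hH : H.PosDef) (A : Matrix m n ℝ) {D : Matrix m m ℝ} (hD : D.PosDef) :
    (fromBlocks (-H) Aᵀ A D).PosDefOn
      (LinearMap.range (fromRows (H⁻¹ * Aᵀ) (1 : Matrix m m ℝ)).mulVecLin) := by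
  rintro _ ⟨y, rfl⟩ hx
  have hy : y ≠ 0 := by rintro rfl; exact hx (map_zero _)
  have hHu : H *ᵥ (H⁻¹ * Aᵀ) *ᵥ y = Aᵀ *ᵥ y := by
    rw [mulVec_mulVec, ← Matrix.mul_assoc,
      mul_nonsing_inv _ ((H.isUnit_iff_isUnit_det).1 hH.isUnit), Matrix.one_mul]
  have hu := hH.posSemidef.dotProduct_mulVec_nonneg ((H⁻¹ * Aᵀ) *ᵥ y)
  have hy' := hD.dotProduct_mulVec_pos hy
  rw [star_trivial] at hu hy'
  simp only [mulVecLin_apply, fromRows_mulVec, one_mulVec,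
    sumElim_dotProduct_fromBlocks_mulVec_sumElim D hHu]
  positivity

end Matrix

theorem stmt_14 {m n : ℕ} (A : Matrix (Fin m) (Fin n) ℝ)
    (H : Matrix (Fin n) (Fin n) ℝ) (hH : H.PosDef)
    (Rd : Matrix (Fin m) (Fin m) ℝ) (hRd : Rd.PosDef)
    (M : Matrix (Fin n ⊕ Fin m) (Fin n ⊕ Fin m) ℝ)
    (hMdef : M = Matrix.fromBlocks (-H) Aᵀ A Rd)
    (hM : M.IsHermitian) :
    M.det ≠ 0 ∧
    (Finset.univ.filter fun i => hM.eigenvalues i < 0).card = n ∧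
    (Finset.univ.filter fun i => 0 < hM.eigenvalues i).card = m := by
  have hdiag := hM.eq_mul_diagonal_eigenvalues_mul_transpose
  subst hMdef
  have hneg : n ≤ #{i | hM.eigenvalues i < 0} := by
    simpa using ((hH.negDefOn_fromBlocks_neg Aᵀ A Rd).finrank_le_card_neg hdiag)
  have hpos : m ≤ #{i | 0 < hM.eigenvalues i} := by
    simpa using ((hH.posDefOn_fromBlocks_neg A hRd).finrank_le_card_pos hdiag)
  have hcount := card_neg_add_card_pos_add_card_zero hM.eigenvalues
  rw [Fintype.card_sum, Fintype.card_fin, Fintype.card_fin] at hcount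
  refine ⟨hM.det_ne_zero_iff.2 fun i hi => ?_, by omega, by omega⟩
  have : 0 < #{k | hM.eigenvalues k = 0} := card_pos.2 ⟨i, by simpa using hi⟩
  omega
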